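/- arXiv:1409.2664 — 2 statements merged into one kernel-verified Lean document; each statement's English description precedes it below -/
import Mathlib

section
/- Let Q be a quadratic form on a real vector space V, and let e₊, e₋ ∈ V satisfy Q(e₊) = 0, Q(e₋) = 0 and polar Q e₊ e₋ = 2. Let M be a module over CliffordAlgebra Q. Then M decomposes as the internal direct sum M = Ann(e₊) ⊕ Ann(e₋); that is, Ann(e₊) + Ann(e₋) = M and Ann(e₊) ∩ Ann(e₋) = {0}. -/
open CliffordAlgebra

/-- For a hyperbolic pair `ep, en` (`Q ep = Q en = 0`,
`polar Q ep en = 2`) a Clifford module `M` decomposes as the internal direct sum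
`M = Ann(ep) ⊕ Ann(en)`: every element is a sum of an element annihilated by
`ι ep` and one annihilated by `ι en`, and the two annihilation spaces intersect
trivially. -/
theorem annihilation_spaces_direct_sum
    {V : Type*} [AddCommGroup V] [Module ℝ V] (Q : QuadraticForm ℝ V)
    {M : Type*} [AddCommGroup M] [Module (CliffordAlgebra Q) M]
    (ep en : V) (hp : Q ep = 0) (hn : Q en = 0)
    (hpol : QuadraticMap.polar (⇑Q) ep en = 2) :
    (∀ m : M, ∃ mp mn : M,
        ι Q ep • mp = 0 ∧ ι Q en • mn = 0 ∧ m = mp + mn) ∧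
    (∀ m : M, ι Q ep • m = 0 → ι Q en • m = 0 → m = 0) := by
  set a := ι Q ep with ha
  set b := ι Q en with hb
  have haa : a * a = 0 := by
    rw [ha, ι_sq_scalar, hp, map_zero]
  have hbb : b * b = 0 := by
    rw [hb, ι_sq_scalar, hn, map_zero]
  have hab : a * b + b * a = 2 := by
    rw [ha, hb, ι_mul_ι_add_swap, hpol]
    exact map_ofNat _ 2
  set h : CliffordAlgebra Q := algebraMap ℝ _ (1/2) with hh
  have h2 : h * 2 = 1 := by
    rw [hh]
    have : (2 : CliffordAlgebra Q) = algebraMap ℝ _ 2 := (map_ofNat _ 2).symm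
    rw [this, ← map_mul]
    norm_num
  have hcomm : ∀ x : CliffordAlgebra Q, x * h = h * x := fun x => (Algebra.commutes _ _).symm
  constructor
  · intro m
    refine ⟨(h * (a * b)) • m, (h * (b * a)) • m, ?_, ?_, ?_⟩
    · rw [smul_smul, show a * (h * (a * b)) = h * (a * a * b) by
        rw [← mul_assoc, hcomm a, mul_assoc, mul_assoc], haa, zero_mul, mul_zero, zero_smul]
    · rw [smul_smul, show b * (h * (b * a)) = h * (b * b * a) by
        rw [← mul_assoc, hcomm b, mul_assoc, mul_assoc], hbb, zero_mul, mul_zero, zero_smul]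
    · rw [← add_smul, ← mul_add, hab, h2, one_smul]
  · intro m hma hmb
    have : (2 : CliffordAlgebra Q) • m = 0 := by
      rw [← hab, add_smul, mul_smul, mul_smul, hma, hmb, smul_zero, smul_zero, add_zero]
    calc m = (h * 2) • m := by rw [h2, one_smul]
      _ = h • ((2 : CliffordAlgebra Q) • m) := by rw [mul_smul]
      _ = 0 := by rw [this, smul_zero]
end

section
/- Let Cl(2,6) be the Clifford algebra of V = ℝ^{2,6} with orthonormal basis ε', ε₀ (timelike, ι(ε')² = ι(ε₀)² = −1) and ε₅, ε₆, …, ε₁₀ (spacelike, square +1), convention ι(v)² = ⟨v,v⟩·1. Consider the five elements of Cl(2,6): h₁ = ι(ε₅)ι(ε₁₀) + ι(ε₇)ι(ε₈), h₂ = ι(ε₆)ι(ε₁₀) + ι(ε₇)ι(ε₉), h₃ = ι(ε₅)ι(ε₉) + ι(ε₆)ι(ε₈), h₄ = ι(ε')ι(ε₇) + ι(ε₀)ι(ε₁₀), h₅ = ι(ε')ι(ε₆) + ι(ε₀)ι(ε₉). Each h_k lies in 𝔰𝔭𝔦𝔫(2,6) and acts on V by x ↦ [h_k, ι(x)] = h_k·ι(x)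 − ι(x)·h_k (which again lies in ι(V)). Then the only subspaces W ⊆ V satisfying [h_k, ι(w)] ∈ ι(W) for all w ∈ W and all k = 1,…,5 are W = {0} and W = V; i.e. the five elements act irreducibly on ℝ^{2,6}. -/
/-! Since `⁅ι a * ι b, ι x⁆ = ι (polar x b • a - polar x a • b)`, each `h_k` acts on `ℝ^{2,6}` as
twice a signed partial permutation of the basis, preserving the partition of the coordinates into
the planes `{0,1}, {2,5}, {3,6}, {4,7}`. Its square is `±4` times the projection onto two of these
planes, so short words in the `h_k` carry any nonzero vector to a nonzero vector of the
`(ε₇, ε₁₀)`-plane `{4,7}`. There `h₂ ∘ h₃ ∘ h₁` acts as `8` times a quarter turn, so an invariant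
`W ≠ 0` contains that whole plane, hence `ε₇`, and from `ε₇` the `h_k` reach every basis vector. -/

open CliffordAlgebra

/-! `Cl(2,6)`: the coordinates `0, 1, 2, …, 7` of `ℝ^{2,6}` correspond to the
orthonormal basis `ε', ε₀` (timelike) and `ε₅, ε₆, ε₇, ε₈, ε₉, ε₁₀` (spacelike). -/

/-- The quadratic form of `ℝ^{2,6}` (convention `ι(v)² = ⟨v,v⟩·1`). -/
noncomputable def Q26 : QuadraticForm ℝ (Fin 8 → ℝ) :=
  QuadraticMap.weightedSumSquares ℝ (fun i : Fin 8 => if (i : ℕ) < 2 then (-1 : ℝ) else 1)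

/-- The Clifford generators `ε', ε₀, ε₅, …, ε₁₀` of `Cl(2,6)`. -/
noncomputable def gCl (i : Fin 8) : CliffordAlgebra Q26 :=
  ι Q26 (Pi.single i 1)

/-- The five curvature elements
`h₁ = ε₅ε₁₀ + ε₇ε₈`, `h₂ = ε₆ε₁₀ + ε₇ε₉`, `h₃ = ε₅ε₉ + ε₆ε₈`,
`h₄ = ε'ε₇ + ε₀ε₁₀`, `h₅ = ε'ε₆ + ε₀ε₉` of `Cl(2,6)`. -/
noncomputable def hElt : Fin 5 → CliffordAlgebra Q26
  | 0 => gCl 2 * gCl 7 + gCl 4 * gCl 5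
  | 1 => gCl 3 * gCl 7 + gCl 4 * gCl 6
  | 2 => gCl 2 * gCl 6 + gCl 3 * gCl 5
  | 3 => gCl 0 * gCl 4 + gCl 1 * gCl 7
  | 4 => gCl 0 * gCl 3 + gCl 1 * gCl 6

namespace CliffordAlgebra

variable {R M : Type*} [CommRing R] [AddCommGroup M] [Module R M] {Q : QuadraticForm R M}

theorem ι_injective_of_invertible_two [Invertible (2 : R)] : Function.Injective (ι Q) := by
  intro x y h
  have h' := congrArg (equivExterior Q) h
  simp only [equivExterior, changeFormEquiv_apply, changeForm_ι] at h'
  exact (ExteriorAlgebra.ι_inj R x y).mp h'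

theorem lie_ι_mul_ι_ι (a b x : M) :
    ⁅ι Q a * ι Q b, ι Q x⁆ = ι Q (QuadraticMap.polar Q x b • a - QuadraticMap.polar Q x a • b) := by
  rw [Ring.lie_def, ← mul_assoc, ι_mul_ι_comm (Q := Q) x a, sub_mul, mul_assoc (ι Q a) (ι Q x),
    ι_mul_ι_comm (Q := Q) x b, map_sub, map_smul, map_smul, Algebra.smul_def, Algebra.smul_def,
    Algebra.commutes (QuadraticMap.polar Q x b)]
  noncomm_ring

end CliffordAlgebra

theorem QuadraticMap.polar_weightedSumSquares_single {ι R : Type*} [CommRing R] [Fintype ι]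
    [DecidableEq ι] (w : ι → R) (x : ι → R) (b : ι) :
    polar (weightedSumSquares R w) x (Pi.single b 1) = 2 * w b * x b := by
  simp only [polar, weightedSumSquares_apply, Pi.add_apply, smul_eq_mul, ← Finset.sum_sub_distrib]
  rw [Finset.sum_eq_single b (fun i _ hib => by simp [Pi.single_eq_of_ne hib]) (by simp)]
  simp only [Pi.single_eq_same]; ring

noncomputable def hAct : Fin 5 → (Fin 8 → ℝ) → Fin 8 → ℝ
  | 0 => fun x => ![0, 0, 2 * x 7, 0, 2 * x 5, -(2 * x 4), 0, -(2 * x 2)]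
  | 1 => fun x => ![0, 0, 0, 2 * x 7, 2 * x 6, 0, -(2 * x 4), -(2 * x 3)]
  | 2 => fun x => ![0, 0, 2 * x 6, 2 * x 5, 0, -(2 * x 3), -(2 * x 2), 0]
  | 3 => fun x => ![2 * x 4, 2 * x 7, 0, 0, 2 * x 0, 0, 0, 2 * x 1]
  | 4 => fun x => ![2 * x 3, 2 * x 6, 0, 2 * x 0, 0, 0, 2 * x 1, 0]

theorem lie_gCl_mul_gCl_ι (a b : Fin 8) (x : Fin 8 → ℝ) :
    ⁅gCl a * gCl b, ι Q26 x⁆ =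
      ι Q26 ((2 * (if (b : ℕ) < 2 then -1 else 1) * x b) • Pi.single a 1 -
        (2 * (if (a : ℕ) < 2 then -1 else 1) * x a) • Pi.single b 1) := by
  rw [gCl, gCl, lie_ι_mul_ι_ι, Q26, QuadraticMap.polar_weightedSumSquares_single,
    QuadraticMap.polar_weightedSumSquares_single]

theorem lie_hElt_ι (k : Fin 5) (x : Fin 8 → ℝ) : ⁅hElt k, ι Q26 x⁆ = ι Q26 (hAct k x) := by
  fin_cases k <;>
  · simp only [Fin.zero_eta, Fin.mk_one, Fin.reduceFinMk]
    rw [hElt, Ring.lie_def, add_mul, mul_add, add_sub_add_comm, ← Ring.lie_def, ← Ring.lie_def,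
      lie_gCl_mul_gCl_ι, lie_gCl_mul_gCl_ι, ← map_add]
    congr 1
    ext j
    fin_cases j <;> simp [hAct]

def HInvariant (W : Submodule ℝ (Fin 8 → ℝ)) : Prop :=
  ∀ k, ∀ w ∈ W, hAct k w ∈ W

def plane47 (a b : ℝ) : Fin 8 → ℝ := ![0, 0, 0, 0, a, 0, 0, b]

theorem hAct_word_47 (w : Fin 8 → ℝ) :
    hAct 0 (hAct 0 (hAct 1 (hAct 1 w))) = plane47 (16 * w 4) (16 * w 7) := by
  ext j; fin_cases j <;> simp [hAct, plane47] <;> ring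

theorem hAct_word_25 (w : Fin 8 → ℝ) :
    hAct 0 (hAct 0 (hAct 0 (hAct 2 (hAct 2 w)))) = plane47 (32 * w 5) (-(32 * w 2)) := by
  ext j; fin_cases j <;> simp [hAct, plane47] <;> ring

theorem hAct_word_36 (w : Fin 8 → ℝ) :
    hAct 1 (hAct 1 (hAct 1 (hAct 2 (hAct 2 w)))) = plane47 (32 * w 6) (-(32 * w 3)) := by
  ext j; fin_cases j <;> simp [hAct, plane47] <;> ring

theorem hAct_word_01 (w : Fin 8 → ℝ) :
    hAct 3 (hAct 3 (hAct 3 (hAct 4 (hAct 4 w)))) = plane47 (32 * w 0) (32 * w 1) := by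
  ext j; fin_cases j <;> simp [hAct, plane47] <;> ring

theorem hAct_word_plane47 (a b : ℝ) :
    hAct 1 (hAct 2 (hAct 0 (plane47 a b))) = plane47 (-(8 * b)) (8 * a) := by
  ext j; fin_cases j <;> simp [hAct, plane47] <;> ring

theorem HInvariant.exists_plane47_mem {W : Submodule ℝ (Fin 8 → ℝ)} (hW : HInvariant W)
    {w : Fin 8 → ℝ} (hw : w ∈ W) (hw0 : w ≠ 0) :
    ∃ a b : ℝ, (a ≠ 0 ∨ b ≠ 0) ∧ plane47 a b ∈ W := by
  by_contra! h
  have vanish : ∀ a b, plane47 a b ∈ W → a = 0 ∧ b = 0 := fun a b hab => by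
    by_contra hne
    exact h a b (not_and_or.1 hne) hab
  obtain ⟨h4, h7⟩ := vanish _ _ (hAct_word_47 w ▸ hW 0 _ (hW 0 _ (hW 1 _ (hW 1 _ hw))))
  obtain ⟨h5, h2⟩ := vanish _ _ (hAct_word_25 w ▸ hW 0 _ (hW 0 _ (hW 0 _ (hW 2 _ (hW 2 _ hw)))))
  obtain ⟨h6, h3⟩ := vanish _ _ (hAct_word_36 w ▸ hW 1 _ (hW 1 _ (hW 1 _ (hW 2 _ (hW 2 _ hw)))))
  obtain ⟨h0, h1⟩ := vanish _ _ (hAct_word_01 w ▸ hW 3 _ (hW 3 _ (hW 3 _ (hW 4 _ (hW 4 _ hw)))))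
  exact hw0 (by ext i; fin_cases i <;> simp_all)

theorem HInvariant.single_four_mem {W : Submodule ℝ (Fin 8 → ℝ)} (hW : HInvariant W)
    {a b : ℝ} (hab : a ≠ 0 ∨ b ≠ 0) (h : plane47 a b ∈ W) : Pi.single 4 1 ∈ W := by
  have hrot : plane47 (-(8 * b)) (8 * a) ∈ W :=
    hAct_word_plane47 a b ▸ hW 1 _ (hW 2 _ (hW 0 _ h))
  have hne : a ^ 2 + b ^ 2 ≠ 0 := by rcases hab with hab | hab <;> positivity
  have hcomb : (a ^ 2 + b ^ 2) • (Pi.single 4 1 : Fin 8 → ℝ) =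
      a • plane47 a b - (b / 8) • plane47 (-(8 * b)) (8 * a) := by
    ext j; fin_cases j <;> simp [plane47] <;> ring
  exact (W.smul_mem_iff hne).1 (hcomb ▸ W.sub_mem (W.smul_mem _ h) (W.smul_mem _ hrot))

theorem HInvariant.single_mem_of_hAct_single {W : Submodule ℝ (Fin 8 → ℝ)} (hW : HInvariant W)
    {k : Fin 5} {i j : Fin 8} {c : ℝ} (hc : c ≠ 0)
    (h : hAct k (Pi.single i 1) = c • Pi.single j 1) (hi : Pi.single i 1 ∈ W) :
    Pi.single j 1 ∈ W :=
  (W.smul_mem_iff hc).1 (h ▸ hW k _ hi)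

theorem HInvariant.eq_top_of_single_four_mem {W : Submodule ℝ (Fin 8 → ℝ)} (hW : HInvariant W)
    (h4 : Pi.single 4 1 ∈ W) : W = ⊤ := by
  have step := fun k i j (c : ℝ) (hc : c ≠ 0) (h : hAct k (Pi.single i 1) = c • Pi.single j 1) =>
    hW.single_mem_of_hAct_single hc h
  have h5 := step 0 4 5 (-2) (by norm_num) (by ext m; fin_cases m <;> simp [hAct]) h4
  have h6 := step 1 4 6 (-2) (by norm_num) (by ext m; fin_cases m <;> simp [hAct]) h4
  have h0 := step 3 4 0 2 (by norm_num) (by ext m; fin_cases m <;> simp [hAct]) h4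
  have h3 := step 2 5 3 2 (by norm_num) (by ext m; fin_cases m <;> simp [hAct]) h5
  have h2 := step 2 6 2 2 (by norm_num) (by ext m; fin_cases m <;> simp [hAct]) h6
  have h1 := step 4 6 1 2 (by norm_num) (by ext m; fin_cases m <;> simp [hAct]) h6
  have h7 := step 3 1 7 2 (by norm_num) (by ext m; fin_cases m <;> simp [hAct]) h1
  rw [eq_top_iff, ← (Pi.basisFun ℝ (Fin 8)).span_eq, Submodule.span_le, Set.range_subset_iff]
  intro i
  fin_cases i <;> simpa

theorem hElt_mem_span_gCl_mul_gCl (k : Fin 5) :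
    hElt k ∈ Submodule.span ℝ {z | ∃ a b : Fin 8, a ≠ b ∧ z = gCl a * gCl b} := by
  fin_cases k <;>
    exact Submodule.add_mem _ (Submodule.subset_span ⟨_, _, by decide, rfl⟩)
      (Submodule.subset_span ⟨_, _, by decide, rfl⟩)

/-- Each of the five elements `h₁, …, h₅` lies in
`𝔰𝔭𝔦𝔫(2,6) = span{ι(ε_a)ι(ε_b) : a ≠ b}` and acts on `V = ℝ^{2,6}` by
`x ↦ [h, ι(x)]`, which again lies in `ι(V)`; and the only subspaces `W ⊆ V` with
`[h_k, ι(w)] ∈ ι(W)` for all `w ∈ W` and all `k` are `{0}` and `V`: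
the five elements act irreducibly on `ℝ^{2,6}`. -/
theorem curvature_elements_act_irreducibly :
    (∀ k : Fin 5, hElt k ∈
      Submodule.span ℝ {z : CliffordAlgebra Q26 | ∃ a b : Fin 8, a ≠ b ∧ z = gCl a * gCl b}) ∧
    (∀ (k : Fin 5) (x : Fin 8 → ℝ), ∃ y : Fin 8 → ℝ, ⁅hElt k, ι Q26 x⁆ = ι Q26 y) ∧
    (∀ W : Submodule ℝ (Fin 8 → ℝ),
      (∀ (k : Fin 5), ∀ w ∈ W, ∃ w' ∈ W, ⁅hElt k, ι Q26 w⁆ = ι Q26 w') →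
      W = ⊥ ∨ W = ⊤) := by
  refine ⟨hElt_mem_span_gCl_mul_gCl, fun k x => ⟨hAct k x, lie_hElt_ι k x⟩, fun W hW => ?_⟩
  have hinv : HInvariant W := fun k w hw => by
    obtain ⟨w', hw', h⟩ := hW k w hw
    rw [lie_hElt_ι] at h
    rwa [ι_injective_of_invertible_two h]
  refine (eq_or_ne W ⊥).imp_right fun hne => ?_
  obtain ⟨w, hw, hw0⟩ := W.ne_bot_iff.1 hne
  obtain ⟨a, b, hab, hplane⟩ := hinv.exists_plane47_mem hw hw0
  exact hinv.eq_top_of_single_four_mem (hinv.single_four_mem hab hplane)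
end
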